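/- arXiv:2306.09276 — 3 statements merged into one kernel-verified Lean document; each statement's English description precedes it below -/
import Mathlib

section
/- If a tile in the top row of a corner-connection knot mosaic is a four-connection-point tile, then it is not in the leftmost column and the tile immediately to its left is non-blank, and it is not in the rightmost column and the tile immediately to its right is non-blank. In particular, the first non-blank tile (from left to right) in the top row of a knot mosaic is never a four-connection-point tile. -/
/-- The eleven corner-connection tile types. -/
inductive Tile : Type
  | T0 | T1 | T2 | T3 | T4 | T5 | T6 | T7 | T8 | T9 | T10
  deriving DecidableEq

open Tile

/-- `cp t a b = true` iff tile `t` has a connection point at the corner of its cell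
with vertical offset `a` (`false` = top, `true` = bottom) and horizontal offset `b`
(`false` = left, `true` = right).  `T0` is blank; `T1`–`T4` are the single-arc tiles
(connection points at the two corners of one side, the four sides in order top,
bottom, left, right); `T5`, `T6` are the diagonal segment tiles ({TL, BR} and
{TR, BL}); `T7`–`T10` (double arcs and crossings) use all four corners. -/
def cp : Tile → Bool → Bool → Bool
  | T0, _, _ => false
  | T1, a, _ => !a
  | T2, a, _ => a
  | T3, _, b => !b
  | T4, _, b => b
  | T5, a, b => a == b
  | T6, a, b => a != b
  | _, _, _ => true

/-- Crossing tiles. -/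
def isCrossing : Tile → Bool
  | T9 | T10 => true
  | _ => false

/-- Tiles with four connection points. -/
def isFourCP : Tile → Bool
  | T7 | T8 | T9 | T10 => true
  | _ => false

/-- Double-arc tiles. -/
def isDoubleArc : Tile → Bool
  | T7 | T8 => true
  | _ => false

/-- The number of connection-point incidences at the grid vertex `(r, c)`:
the number of cells incident to this vertex whose tile has a connection point
at the corresponding corner.  (The cell incident to `(r, c)` via its corner
with offsets `(a, b)` is the cell `(r - a, c - b)`, which exists iff `a ≤ r`
and `b ≤ c`.) -/
def vertexCount (M : ℕ → ℕ → Tile) (r c : ℕ) : ℕ :=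
  ∑ p : Bool × Bool,
    if p.1.toNat ≤ r ∧ p.2.toNat ≤ c ∧
        cp (M (r - p.1.toNat) (c - p.2.toNat)) p.1 p.2 = true
    then 1 else 0

/-- A corner-connection knot mosaic with `m` rows and `n` columns: a tiling of the
`m × n` grid (cells outside the grid are blank) that is suitably connected with no
triple points, i.e. every vertex of the `(m+1) × (n+1)` grid of cell corners has
exactly 0 or 2 connection-point incidences. -/
def IsKnotMosaicRect (m n : ℕ) (M : ℕ → ℕ → Tile) : Prop :=
  (∀ i j, m ≤ i ∨ n ≤ j → M i j = Tile.T0) ∧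
  (∀ r c, r ≤ m → c ≤ n → vertexCount M r c = 0 ∨ vertexCount M r c = 2)

/-- A corner-connection knot `n`-mosaic (square, `n` rows and `n` columns). -/
def IsKnotMosaic (n : ℕ) (M : ℕ → ℕ → Tile) : Prop :=
  IsKnotMosaicRect n n M

/-- The number of crossing tiles in the `m × n` grid. -/
def crossingCountRect (m n : ℕ) (M : ℕ → ℕ → Tile) : ℕ :=
  ((Finset.range m ×ˢ Finset.range n).filter
    (fun p => isCrossing (M p.1 p.2) = true)).card

/-- The number of crossing tiles in the `n × n` grid. -/
def crossingCount (n : ℕ) (M : ℕ → ℕ → Tile) : ℕ :=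
  crossingCountRect n n M

/-!
A vertex of the top boundary lies on at most two cells: the vertex `(0, c + 1)` only on the top
corners of cells `(0, c)` and `(0, c + 1)`, and the vertex `(0, 0)` only on cell `(0, 0)`. As its
count is `0` or `2`, the top-left corner of cell `(0, 0)` is unused, and the top-right corner of
cell `(0, c)` is used exactly when the top-left corner of cell `(0, c + 1)` is. A
four-connection-point tile uses both top corners, so it is not at `(0, 0)` and both of its
neighbours use a corner, hence are non-blank and lie inside the mosaic.
-/

namespace Tile

lemma cp_top_of_isFourCP {t : Tile} (ht : isFourCP t = true) (b : Bool) :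
    cp t false b = true := by
  cases t <;> cases b <;> simp_all [isFourCP, cp]

lemma ne_T0_of_cp {t : Tile} {a b : Bool} (h : cp t a b = true) : t ≠ T0 := by
  rintro rfl
  simp [cp] at h

end Tile

section TopRow

variable (M : ℕ → ℕ → Tile)

lemma vertexCount_zero_zero : vertexCount M 0 0 = (cp (M 0 0) false false).toNat := by
  rw [vertexCount, Fintype.sum_prod_type]
  simp only [Fintype.sum_bool, Bool.toNat_true, Bool.toNat_false, Nat.sub_zero, Nat.le_refl, true_and]
  cases cp (M 0 0) false false <;> rfl

lemma vertexCount_zero_succ (c : ℕ) :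
    vertexCount M 0 (c + 1) =
      (cp (M 0 c) false true).toNat + (cp (M 0 (c + 1)) false false).toNat := by
  rw [vertexCount, Fintype.sum_prod_type]
  simp only [Fintype.sum_bool, Bool.toNat_true, Bool.toNat_false, Nat.sub_zero, Nat.add_sub_cancel,
    Nat.le_refl, Nat.le_add_left, true_and]
  cases cp (M 0 c) false true <;> cases cp (M 0 (c + 1)) false false <;> rfl

end TopRow

namespace IsKnotMosaicRect

variable {m n : ℕ} {M : ℕ → ℕ → Tile}

lemma lt_right_of_ne_T0 (hM : IsKnotMosaicRect m n M) {i j : ℕ} (h : M i j ≠ T0) : j < n := by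
  by_contra hj
  exact h (hM.1 i j (Or.inr (not_lt.mp hj)))

lemma cp_top_left_corner_eq_false (hM : IsKnotMosaicRect m n M) :
    cp (M 0 0) false false = false := by
  have h := hM.2 0 0 m.zero_le n.zero_le
  rw [vertexCount_zero_zero] at h
  generalize cp (M 0 0) false false = x at h ⊢
  cases x <;> simp_all

lemma cp_top_right_eq_cp_top_left (hM : IsKnotMosaicRect m n M) {c : ℕ} (hc : c < n) :
    cp (M 0 c) false true = cp (M 0 (c + 1)) false false := by
  have h := hM.2 0 (c + 1) m.zero_le hc
  rw [vertexCount_zero_succ] at h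
  generalize cp (M 0 c) false true = x at h ⊢
  generalize cp (M 0 (c + 1)) false false = y at h ⊢
  cases x <;> cases y <;> simp_all

lemma nonblank_neighbors_of_isFourCP (hM : IsKnotMosaicRect m n M) {j : ℕ} (hj : j < n)
    (hfour : isFourCP (M 0 j) = true) :
    0 < j ∧ M 0 (j - 1) ≠ T0 ∧ j + 1 < n ∧ M 0 (j + 1) ≠ T0 := by
  obtain _ | k := j
  · simpa [hM.cp_top_left_corner_eq_false] using Tile.cp_top_of_isFourCP hfour false
  have hleft : cp (M 0 k) false true = true := by
    rw [hM.cp_top_right_eq_cp_top_left (by omega)]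
    exact Tile.cp_top_of_isFourCP hfour false
  have hright : cp (M 0 (k + 2)) false false = true := by
    rw [← hM.cp_top_right_eq_cp_top_left hj]
    exact Tile.cp_top_of_isFourCP hfour true
  have hright_ne := Tile.ne_T0_of_cp hright
  exact ⟨k.succ_pos, Tile.ne_T0_of_cp hleft, hM.lt_right_of_ne_T0 hright_ne, hright_ne⟩

end IsKnotMosaicRect

/-- If a tile in the top row of a corner-connection knot mosaic is a
four-connection-point tile, then it is not in the leftmost column and the tile
immediately to its left is non-blank, and it is not in the rightmost column and
the tile immediately to its right is non-blank.  In particular, the first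
non-blank tile (from left to right) in the top row is never a
four-connection-point tile. -/
theorem top_row_fourCP_has_nonblank_neighbors
    (n : ℕ) (M : ℕ → ℕ → Tile) (hM : IsKnotMosaic n M) :
    (∀ j, j < n → isFourCP (M 0 j) = true →
      0 < j ∧ M 0 (j - 1) ≠ Tile.T0 ∧ j + 1 < n ∧ M 0 (j + 1) ≠ Tile.T0) ∧
    (∀ j, j < n → M 0 j ≠ Tile.T0 → (∀ k, k < j → M 0 k = Tile.T0) →
      isFourCP (M 0 j) = false) := by
  refine ⟨fun j hj hfour => hM.nonblank_neighbors_of_isFourCP hj hfour,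
    fun j hj _ hfirst => ?_⟩
  by_contra hfour
  obtain ⟨hpos, hleft, -⟩ :=
    hM.nonblank_neighbors_of_isFourCP hj (Bool.not_eq_false _ ▸ hfour)
  exact hleft (hfirst (j - 1) (by omega))
end

section
/- Let m ≥ 3 and n ≥ 3 both be even. Then the number of crossing tiles in a corner-connection knot mosaic with m rows and n columns is at most mn/2. -/
open Tile

open Finset

lemma isFourCP_of_isCrossing {t : Tile} (h : isCrossing t = true) : isFourCP t = true := by
  cases t <;> simp_all [isCrossing, isFourCP]

lemma cp_of_isFourCP {t : Tile} (h : isFourCP t = true) (a b : Bool) : cp t a b = true := by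
  cases t <;> simp_all [isFourCP, cp]

lemma vertexCount_succ_succ (M : ℕ → ℕ → Tile) (r c : ℕ) :
    vertexCount M (r + 1) (c + 1) =
      #{p : Bool × Bool | cp (M (r + 1 - p.1.toNat) (c + 1 - p.2.toNat)) p.1 p.2 = true} := by
  rw [vertexCount, sum_boole, Nat.cast_id]
  congr 1
  refine filter_congr fun p _ => ?_
  rw [and_iff_right (by have := p.1.toNat_le; omega),
    and_iff_right (by have := p.2.toNat_le; omega)]

lemma add_one_sub_toNat_decide_eq {r i : ℕ} (h₁ : r ≤ i) (h₂ : i ≤ r + 1) :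
    r + 1 - (decide (i = r)).toNat = i := by
  by_cases h : i = r
  · simp [h]
  · simp only [h, decide_false, Bool.toNat_false]
    omega

lemma card_block_isFourCP_le_vertexCount (M : ℕ → ℕ → Tile) (r c : ℕ) :
    #{p ∈ Icc r (r + 1) ×ˢ Icc c (c + 1) | isFourCP (M p.1 p.2) = true} ≤
      vertexCount M (r + 1) (c + 1) := by
  rw [vertexCount_succ_succ]
  refine card_le_card_of_injOn (fun p => (decide (p.1 = r), decide (p.2 = c))) ?_ ?_
  · rintro ⟨i, j⟩ hp
    simp only [coe_filter, mem_product, mem_Icc, Set.mem_ofPred_eq] at hp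
    obtain ⟨⟨hi, hj⟩, hfour⟩ := hp
    simp only [coe_filter, mem_univ, true_and, Set.mem_ofPred_eq,
      add_one_sub_toNat_decide_eq hi.1 hi.2, add_one_sub_toNat_decide_eq hj.1 hj.2]
    exact cp_of_isFourCP hfour _ _
  · rintro ⟨i, j⟩ hp ⟨i', j'⟩ hp' heq
    simp only [coe_filter, mem_product, mem_Icc, Set.mem_ofPred_eq] at hp hp'
    simp only [Prod.mk.injEq, decide_eq_decide] at heq ⊢
    omega

/-- Cut the `2a × 2b` grid into `2 × 2` blocks: every tile with four connection points
has one at the centre vertex of its block, which has at most two incidences. -/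
lemma card_filter_isFourCP_le_of_isKnotMosaicRect {a b : ℕ} {M : ℕ → ℕ → Tile}
    (hM : IsKnotMosaicRect (2 * a) (2 * b) M) :
    #{p ∈ range (2 * a) ×ˢ range (2 * b) | isFourCP (M p.1 p.2) = true} ≤
      2 * (a * b) := by
  let block (q : ℕ × ℕ) : Finset (ℕ × ℕ) :=
    {p ∈ Icc (2 * q.1) (2 * q.1 + 1) ×ˢ Icc (2 * q.2) (2 * q.2 + 1) |
      isFourCP (M p.1 p.2) = true}
  have hcover : {p ∈ range (2 * a) ×ˢ range (2 * b) | isFourCP (M p.1 p.2) = true}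
      ⊆ (range a ×ˢ range b).biUnion block := by
    rintro ⟨i, j⟩ hp
    simp only [mem_filter, mem_product, mem_range] at hp
    simp only [mem_biUnion, mem_product, mem_range, mem_filter,
      mem_Icc, block, Prod.exists]
    exact ⟨i / 2, j / 2, by omega, by omega, hp.2⟩
  have hblock : ∀ q ∈ range a ×ˢ range b, #(block q) ≤ 2 := by
    rintro ⟨u, v⟩ hq
    simp only [mem_product, mem_range] at hq
    have hcount := hM.2 (2 * u + 1) (2 * v + 1) (by omega) (by omega)
    have := card_block_isFourCP_le_vertexCount M (2 * u) (2 * v)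
    simp only [block]
    omega
  calc _ ≤ #((range a ×ˢ range b).biUnion block) := card_le_card hcover
    _ ≤ ∑ q ∈ range a ×ˢ range b, #(block q) := card_biUnion_le
    _ ≤ ∑ _q ∈ range a ×ˢ range b, 2 := sum_le_sum hblock
    _ = 2 * (a * b) := by simp [mul_comm]

theorem max_crossings_rect_even_even_general
    (m n : ℕ) (hmpar : Even m) (hnpar : Even n)
    (M : ℕ → ℕ → Tile) (hM : IsKnotMosaicRect m n M) :
    crossingCountRect m n M ≤ m * n / 2 := by
  obtain ⟨a, rfl⟩ := hmpar
  obtain ⟨b, rfl⟩ := hnpar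
  rw [← two_mul, ← two_mul] at hM ⊢
  calc crossingCountRect (2 * a) (2 * b) M
      ≤ #{p ∈ range (2 * a) ×ˢ range (2 * b) | isFourCP (M p.1 p.2) = true} :=
        card_le_card (monotone_filter_right _ fun _ _ => isFourCP_of_isCrossing)
    _ ≤ 2 * (a * b) := card_filter_isFourCP_le_of_isKnotMosaicRect hM
    _ = 2 * a * (2 * b) / 2 := by rw [mul_mul_mul_comm]; omega

/-- For `m, n ≥ 3` both even, a corner-connection knot mosaic with `m` rows and
`n` columns has at most `m * n / 2` crossing tiles. -/
theorem max_crossings_rect_even_even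
    (m n : ℕ) (hm : 3 ≤ m) (hn : 3 ≤ n) (hmpar : Even m) (hnpar : Even n)
    (M : ℕ → ℕ → Tile) (hM : IsKnotMosaicRect m n M) :
    crossingCountRect m n M ≤ m * n / 2 :=
  max_crossings_rect_even_even_general m n hmpar hnpar M hM
end

section
/- Let m ≥ 3 be odd and n ≥ 3 be even. Then the number of crossing tiles in a corner-connection knot mosaic with m rows and n columns is at most (mn + n − 4)/2 (equivalently, at most (m−1)n/2 + (n − 2)). -/
open Tile

/-!
A crossing tile has connection points at all four corners. Fix a vertex row `r` and a parity
`q r`: every cell touching row `r` has exactly one corner of parity `q r` on it, so each crossing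
tile is seen once from its top vertex row and once from its bottom one, and `2 · #crossings` is at
most the sum of the vertex counts over the vertices `(r, c)` with `c ≡ q r`. Each vertex count is
at most `2`. For `n = 2k`, use the `k` odd columns on the interior rows and the `k + 1` even columns
on rows `0` and `m`, where the two end vertices are corners of the grid, touch a single cell and
therefore count `0`. Hence `2 · #crossings ≤ 2k (m - 1) + 2 (2k - 2) = (m + 1) n - 4`.
-/

open Finset

lemma two_mul_sum_add_le_sum {a s : ℕ → ℕ} (h0 : a 0 ≤ s 0)
    (hsucc : ∀ r, a r + a (r + 1) ≤ s (r + 1)) (m : ℕ) :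
    2 * ∑ i ∈ range m, a i + a m ≤ ∑ r ∈ range (m + 1), s r := by
  induction m with
  | zero => simpa using h0
  | succ m ih =>
    rw [sum_range_succ, sum_range_succ _ (m + 1)]
    linarith [hsucc m]

lemma ite_one_le_ite_one {P Q : Prop} [Decidable P] [Decidable Q] (h : P → Q) :
    (if P then 1 else 0 : ℕ) ≤ if Q then 1 else 0 := by
  split_ifs <;> simp_all

lemma cp_of_isCrossing {t : Tile} (ht : isCrossing t = true) (a b : Bool) : cp t a b = true := by
  cases t <;> simp_all [isCrossing, cp]

lemma cp_T0 (a b : Bool) : cp T0 a b = false := rfl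

lemma vertexCount_eq (M : ℕ → ℕ → Tile) (r c : ℕ) :
    vertexCount M r c =
      (if 1 ≤ r ∧ 1 ≤ c ∧ cp (M (r - 1) (c - 1)) true true then 1 else 0) +
      (if 1 ≤ r ∧ cp (M (r - 1) c) true false then 1 else 0) +
      (if 1 ≤ c ∧ cp (M r (c - 1)) false true then 1 else 0) +
      (if cp (M r c) false false then 1 else 0) := by
  simp only [vertexCount, Fintype.sum_prod_type, Fintype.sum_bool, Bool.toNat_true,
    Bool.toNat_false, Nat.zero_le, true_and, Nat.sub_zero]
  ring

def parityCols (n q : ℕ) : Finset ℕ :=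
  (range (n + 1)).filter fun c => c % 2 = q

lemma le_of_mem_parityCols {n q c : ℕ} (hc : c ∈ parityCols n q) : c ≤ n := by
  rw [parityCols, mem_filter, mem_range] at hc
  omega

lemma card_parityCols_one (k : ℕ) : (parityCols (2 * k) 1).card = k := by
  rw [parityCols, card_filter]
  induction k with
  | zero => simp
  | succ k ih =>
    rw [show 2 * (k + 1) + 1 = 2 * k + 1 + 1 + 1 by ring, sum_range_succ, sum_range_succ, ih]
    split_ifs <;> omega

lemma card_parityCols_zero (k : ℕ) : (parityCols (2 * k) 0).card = k + 1 := by
  rw [parityCols, card_filter]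
  induction k with
  | zero => rfl
  | succ k ih =>
    rw [show 2 * (k + 1) + 1 = 2 * k + 1 + 1 + 1 by ring, sum_range_succ, sum_range_succ, ih]
    split_ifs <;> omega

section

variable (M : ℕ → ℕ → Tile)

def rowCrossings (n i : ℕ) : ℕ :=
  ((range n).filter fun j => isCrossing (M i j) = true).card

def rowCrossingsAt (i c : ℕ) : ℕ :=
  (if 1 ≤ c ∧ isCrossing (M i (c - 1)) = true then 1 else 0) +
    if isCrossing (M i c) = true then 1 else 0

lemma crossingCountRect_eq_sum_rowCrossings (m n : ℕ) :
    crossingCountRect m n M = ∑ i ∈ range m, rowCrossings M n i := by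
  rw [crossingCountRect, card_filter, sum_product]
  exact sum_congr rfl fun i _ => (card_filter _ _).symm

lemma rowCrossings_le_sum_rowCrossingsAt (n i : ℕ) {q : ℕ} (hq : q < 2) :
    rowCrossings M n i ≤ ∑ c ∈ parityCols n q, rowCrossingsAt M i c := by
  -- Cell `j` is paid for by whichever of the columns `j`, `j + 1` has parity `q`; when `n` itself
  -- has parity `q`, column `n` also pays for cell `n`, which keeps the induction going.
  suffices h : rowCrossings M n i + (if n % 2 = q ∧ isCrossing (M i n) = true then 1 else 0) ≤
      ∑ c ∈ parityCols n q, rowCrossingsAt M i c by omega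
  induction n with
  | zero =>
    rw [rowCrossings, parityCols, sum_filter, sum_range_one, rowCrossingsAt]
    obtain rfl | rfl : q = 0 ∨ q = 1 := by omega
    all_goals simp
  | succ n ih =>
    have hpar : (n + 1) % 2 = q ↔ ¬ n % 2 = q := by omega
    rw [rowCrossings, card_filter] at ih ⊢
    rw [parityCols, sum_filter] at ih ⊢
    rw [sum_range_succ, sum_range_succ _ (n + 1), rowCrossingsAt, Nat.add_sub_cancel]
    by_cases hn : n % 2 = q <;>
      simp only [hn, hpar, not_true, not_false_iff, true_and, false_and, if_false,
        Nat.le_add_left] at ih ⊢ <;>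
      split_ifs at ih ⊢ <;> omega

lemma rowCrossingsAt_zero_le_vertexCount (c : ℕ) :
    rowCrossingsAt M 0 c ≤ vertexCount M 0 c := by
  have hleft := ite_one_le_ite_one (P := 1 ≤ c ∧ isCrossing (M 0 (c - 1)) = true)
    (Q := 1 ≤ c ∧ cp (M 0 (c - 1)) false true) fun h => ⟨h.1, cp_of_isCrossing h.2 _ _⟩
  have hright := ite_one_le_ite_one (P := isCrossing (M 0 c) = true)
    (Q := cp (M 0 c) false false) fun h => cp_of_isCrossing h _ _
  rw [rowCrossingsAt, vertexCount_eq]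
  omega

lemma rowCrossingsAt_add_le_vertexCount (r c : ℕ) :
    rowCrossingsAt M r c + rowCrossingsAt M (r + 1) c ≤ vertexCount M (r + 1) c := by
  have hleft (i : ℕ) (a : Bool) := ite_one_le_ite_one
    (P := 1 ≤ c ∧ isCrossing (M i (c - 1)) = true) (Q := 1 ≤ c ∧ cp (M i (c - 1)) a true)
    fun h => ⟨h.1, cp_of_isCrossing h.2 _ _⟩
  have hright (i : ℕ) (a : Bool) := ite_one_le_ite_one (P := isCrossing (M i c) = true)
    (Q := cp (M i c) a false) fun h => cp_of_isCrossing h _ _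
  rw [rowCrossingsAt, rowCrossingsAt, vertexCount_eq, Nat.add_sub_cancel]
  simp only [Nat.le_add_left, true_and]
  linarith [hleft r true, hleft (r + 1) false, hright r true, hright (r + 1) false]

theorem two_mul_crossingCountRect_le (m n : ℕ) (q : ℕ → ℕ)
    (hq : ∀ r, q r < 2) :
    2 * crossingCountRect m n M ≤
      ∑ r ∈ range (m + 1), ∑ c ∈ parityCols n (q r), vertexCount M r c := by
  have h0 : rowCrossings M n 0 ≤ ∑ c ∈ parityCols n (q 0), vertexCount M 0 c :=
    (rowCrossings_le_sum_rowCrossingsAt M n 0 (hq 0)).trans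
      (sum_le_sum fun c _ => rowCrossingsAt_zero_le_vertexCount M c)
  have hsucc (r : ℕ) : rowCrossings M n r + rowCrossings M n (r + 1) ≤
      ∑ c ∈ parityCols n (q (r + 1)), vertexCount M (r + 1) c :=
    calc _ ≤ ∑ c ∈ parityCols n (q (r + 1)), rowCrossingsAt M r c +
          ∑ c ∈ parityCols n (q (r + 1)), rowCrossingsAt M (r + 1) c :=
          add_le_add (rowCrossings_le_sum_rowCrossingsAt M n r (hq _))
            (rowCrossings_le_sum_rowCrossingsAt M n (r + 1) (hq _))
      _ ≤ _ := by
          rw [← sum_add_distrib]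
          exact sum_le_sum fun c _ => rowCrossingsAt_add_le_vertexCount M r c
  rw [crossingCountRect_eq_sum_rowCrossings]
  linarith [two_mul_sum_add_le_sum (a := rowCrossings M n)
    (s := fun r => ∑ c ∈ parityCols n (q r), vertexCount M r c) h0 hsucc m]

end

section

variable {m n : ℕ} {M : ℕ → ℕ → Tile}

lemma IsKnotMosaicRect.vertexCount_le_two (hM : IsKnotMosaicRect m n M) {r c : ℕ}
    (hr : r ≤ m) (hc : c ≤ n) : vertexCount M r c ≤ 2 := by
  rcases hM.2 r c hr hc with h | h <;> omega

lemma IsKnotMosaicRect.vertexCount_corner (hM : IsKnotMosaicRect m n M) {r c : ℕ}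
    (hr : r = 0 ∨ r = m) (hc : c = 0 ∨ c = n) : vertexCount M r c = 0 := by
  have hrow (j : ℕ) : M m j = T0 := hM.1 m j (Or.inl le_rfl)
  have hcol (i : ℕ) : M i n = T0 := hM.1 i n (Or.inr le_rfl)
  have hle : vertexCount M r c ≤ 1 := by
    rw [vertexCount_eq]
    rcases hr with rfl | rfl <;> rcases hc with rfl | rfl <;>
      simp only [hrow, hcol, cp_T0, Bool.false_eq_true, nonpos_iff_eq_zero, one_ne_zero,
        false_and, and_false, ↓reduceIte, add_zero, zero_add] <;> split_ifs <;> omega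
  rcases hM.2 r c (by omega) (by omega) with h | h <;> omega

lemma IsKnotMosaicRect.sum_parityCols_one_vertexCount_le {k : ℕ}
    (hM : IsKnotMosaicRect m (2 * k) M) {r : ℕ} (hr : r ≤ m) :
    ∑ c ∈ parityCols (2 * k) 1, vertexCount M r c ≤ 2 * k := by
  calc _ ≤ (parityCols (2 * k) 1).card • 2 :=
        sum_le_card_nsmul _ _ _ fun c hc => hM.vertexCount_le_two hr (le_of_mem_parityCols hc)
    _ = 2 * k := by rw [card_parityCols_one, smul_eq_mul, mul_comm]

lemma IsKnotMosaicRect.sum_parityCols_zero_vertexCount_add_four_le {k : ℕ}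
    (hM : IsKnotMosaicRect m (2 * k) M) (hk : 1 ≤ k) {r : ℕ} (hr : r = 0 ∨ r = m) :
    ∑ c ∈ parityCols (2 * k) 0, vertexCount M r c + 4 ≤ 2 * k + 2 := by
  have hmem (c : ℕ) (hc : c ≤ 2 * k) (heven : c % 2 = 0) : c ∈ parityCols (2 * k) 0 := by
    rw [parityCols, mem_filter, mem_range]
    exact ⟨by omega, heven⟩
  set inner := ((parityCols (2 * k) 0).erase 0).erase (2 * k)
  have hcard : inner.card + 2 = k + 1 := by
    rw [card_erase_of_mem (mem_erase.2 ⟨by omega, hmem _ le_rfl (by omega)⟩),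
      card_erase_of_mem (hmem 0 (Nat.zero_le _) rfl), card_parityCols_zero]
    omega
  have hsum : ∑ c ∈ parityCols (2 * k) 0, vertexCount M r c = ∑ c ∈ inner, vertexCount M r c := by
    rw [sum_erase _ (hM.vertexCount_corner hr (Or.inr rfl)),
      sum_erase _ (hM.vertexCount_corner hr (Or.inl rfl))]
  have hinner : ∑ c ∈ inner, vertexCount M r c ≤ inner.card • 2 :=
    sum_le_card_nsmul _ _ _ fun c hc => hM.vertexCount_le_two (by omega)
      (le_of_mem_parityCols (mem_of_mem_erase (mem_of_mem_erase hc)))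
  rw [smul_eq_mul] at hinner
  omega

lemma IsKnotMosaicRect.sum_vertexCount_add_four_le {k : ℕ} (hM : IsKnotMosaicRect m (2 * k) M)
    (hm : 1 ≤ m) (hk : 1 ≤ k) :
    ∑ r ∈ range (m + 1),
        ∑ c ∈ parityCols (2 * k) (if r = 0 ∨ r = m then 0 else 1), vertexCount M r c + 4 ≤
      (m + 1) * (2 * k) := by
  set S := fun r => ∑ c ∈ parityCols (2 * k) (if r = 0 ∨ r = m then 0 else 1), vertexCount M r c
  have htop : S 0 + 4 ≤ 2 * k + 2 := by
    simpa [S] using hM.sum_parityCols_zero_vertexCount_add_four_le hk (Or.inl rfl)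
  have hbot : S m + 4 ≤ 2 * k + 2 := by
    simpa [S] using hM.sum_parityCols_zero_vertexCount_add_four_le hk (Or.inr rfl)
  obtain ⟨l, rfl⟩ : ∃ l, m = l + 1 := ⟨m - 1, by omega⟩
  have hmid : ∑ i ∈ range l, S (i + 1) ≤ l * (2 * k) := by
    calc _ ≤ (range l).card • (2 * k) := sum_le_card_nsmul _ _ _ fun i hi => by
          rw [mem_range] at hi
          simpa [S, show i ≠ l by omega] using
            hM.sum_parityCols_one_vertexCount_le (r := i + 1) (by omega)
      _ = l * (2 * k) := by rw [card_range, smul_eq_mul]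
  have hsplit : ∑ r ∈ range (l + 2), S r = S 0 + ∑ i ∈ range l, S (i + 1) + S (l + 1) := by
    rw [sum_range_succ, sum_range_succ', add_comm (∑ i ∈ range l, S (i + 1))]
  have hexpand : (l + 1 + 1) * (2 * k) = l * (2 * k) + 2 * (2 * k) := by ring
  rw [hsplit]
  omega
end

theorem max_crossings_rect_odd_even_general
    (m n : ℕ) (hnpar : Even n)
    (M : ℕ → ℕ → Tile) (hM : IsKnotMosaicRect m n M) :
    crossingCountRect m n M ≤ (m * n + n - 4) / 2 := by
  obtain ⟨k, rfl⟩ := hnpar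
  rw [← two_mul] at hM ⊢
  rcases Nat.eq_zero_or_pos m with rfl | hm
  · simp [crossingCountRect]
  rcases Nat.eq_zero_or_pos k with rfl | hk
  · simp [crossingCountRect]
  have hlow := two_mul_crossingCountRect_le M m (2 * k) (fun r => if r = 0 ∨ r = m then 0 else 1)
    fun r => by split_ifs <;> omega
  have hup := hM.sum_vertexCount_add_four_le hm hk
  have hexpand : (m + 1) * (2 * k) = m * (2 * k) + 2 * k := by ring
  omega

/-- For `m ≥ 3` odd and `n ≥ 3` even, a corner-connection knot mosaic with `m`
rows and `n` columns has at most `(m * n + n − 4) / 2` crossing tiles. -/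
theorem max_crossings_rect_odd_even
    (m n : ℕ) (hm : 3 ≤ m) (hn : 3 ≤ n) (hmpar : Odd m) (hnpar : Even n)
    (M : ℕ → ℕ → Tile) (hM : IsKnotMosaicRect m n M) :
    crossingCountRect m n M ≤ (m * n + n - 4) / 2 :=
  max_crossings_rect_odd_even_general m n hnpar M hM
end
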